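/- arXiv:2306.02497 — 4 statements merged into one kernel-verified Lean document; each statement's English description precedes it below -/
import Mathlib

section
/- Let ε > 0, let N be a positive integer, and for each i = 1, …, N let Z_i be a real k_i × m matrix. Then log det(I_m + (1/(N ε)) ∑_{i=1}^N Z_iᵀ Z_i) ≥ (1/N) ∑_{i=1}^N log det(I_{k_i} + (1/ε) Z_i Z_iᵀ). (Paper's Theorem 1: the averaged global log-determinant objective is bounded below by the average of the per-source log-determinant objectives.) -/
open Matrix

section Aux

variable {n : ℕ}

lemma aux_posSemidef_smul {A : Matrix (Fin n) (Fin n) ℝ} (hA : A.PosSemidef) {c : ℝ}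
    (hc : 0 ≤ c) : (c • A).PosSemidef := by
  refine ⟨?_, fun x => ?_⟩
  · unfold Matrix.IsHermitian
    rw [conjTranspose_smul, hA.1.eq]
    simp
  · exact (hA.smul hc).2 x

lemma aux_posDef_smul {A : Matrix (Fin n) (Fin n) ℝ} (hA : A.PosDef) {c : ℝ}
    (hc : 0 < c) : (c • A).PosDef := by
  refine ⟨(aux_posSemidef_smul hA.posSemidef hc.le).1, fun x hx => ?_⟩
  exact (hA.smul hc).2 hx

lemma aux_psd_det_nonneg {A : Matrix (Fin n) (Fin n) ℝ} (hA : A.PosSemidef) : 0 ≤ A.det := by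
  rw [hA.isHermitian.det_eq_prod_eigenvalues]
  exact Finset.prod_nonneg fun i _ => by simpa using hA.eigenvalues_nonneg i

/-- key eigenvalue computation: `det (a • 1 + b • C) = ∏ (a + b * μᵢ)`. -/
lemma aux_det_smul_one_add_smul {C : Matrix (Fin n) (Fin n) ℝ} (hC : C.PosSemidef)
    {a b : ℝ} (ha : 0 ≤ a) (hb : 0 ≤ b) (hab : a + b = 1) :
    C.det ^ b ≤ (a • (1 : Matrix (Fin n) (Fin n) ℝ) + b • C).det := by
  have hH := hC.isHermitian
  set U : Matrix (Fin n) (Fin n) ℝ := (hH.eigenvectorUnitary : Matrix (Fin n) (Fin n) ℝ) with hU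
  have hUU : U * star U = 1 := (Matrix.mem_unitaryGroup_iff).mp hH.eigenvectorUnitary.2
  have hdiag : C = U * diagonal (RCLike.ofReal ∘ hH.eigenvalues) * star U := hH.spectral_theorem
  have hkey : a • (1 : Matrix (Fin n) (Fin n) ℝ) + b • C
      = U * (diagonal fun i => a + b * hH.eigenvalues i) * star U := by
    have h1 : a • (1 : Matrix (Fin n) (Fin n) ℝ) = U * (a • 1) * star U := by
      rw [Matrix.mul_smul, Matrix.smul_mul, mul_one, hUU]
    have h2 : b • C = U * (b • diagonal (RCLike.ofReal ∘ hH.eigenvalues)) * star U := by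
      rw [Matrix.mul_smul, Matrix.smul_mul, ← hdiag]
    rw [h1, h2, ← Matrix.add_mul, ← Matrix.mul_add]
    congr 2
    ext i j
    by_cases h : i = j <;>
      simp [h, Matrix.diagonal, Matrix.one_apply, RCLike.ofReal, mul_comm]
  have hdetU : U.det * (star U).det = 1 := by rw [← det_mul, hUU, det_one]
  have hdet : (a • (1 : Matrix (Fin n) (Fin n) ℝ) + b • C).det
      = ∏ i, (a + b * hH.eigenvalues i) := by
    rw [hkey, det_mul, det_mul, det_diagonal, mul_right_comm, hdetU, one_mul]
  have hdetC : C.det = ∏ i, hH.eigenvalues i := by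
    rw [hH.det_eq_prod_eigenvalues]; norm_num
  rw [hdet, hdetC, ← Real.finset_prod_rpow _ _ (fun i _ => hC.eigenvalues_nonneg i)]
  refine Finset.prod_le_prod (fun i _ => Real.rpow_nonneg (hC.eigenvalues_nonneg i) _)
    (fun i _ => ?_)
  have := Real.geom_mean_le_arith_mean2_weighted ha hb zero_le_one
    (hC.eigenvalues_nonneg i) hab
  simpa using this

/-- Two-point log-concavity of the determinant on positive definite matrices. -/
lemma aux_logdet_pair {A B : Matrix (Fin n) (Fin n) ℝ} (hA : A.PosDef) (hB : B.PosDef)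
    {a b : ℝ} (ha : 0 ≤ a) (hb : 0 ≤ b) (hab : a + b = 1) :
    a * Real.log A.det + b * Real.log B.det ≤ Real.log (a • A + b • B).det := by
  rcases eq_or_lt_of_le ha with rfl | ha'
  · have hb1 : b = 1 := by linarith
    subst hb1; simp
  rcases eq_or_lt_of_le hb with rfl | hb'
  · have ha1 : a = 1 := by linarith
    subst ha1; simp
  -- now 0 < a, 0 < b
  obtain ⟨T, hT, hTT⟩ : ∃ T : Matrix (Fin n) (Fin n) ℝ, T.PosSemidef ∧ T * T = A :=
    open scoped MatrixOrder in
    ⟨CFC.sqrt A, (CFC.sqrt_nonneg A).posSemidef, CFC.sqrt_mul_sqrt_self A hA.posSemidef.nonneg⟩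
  have hdetT2 : T.det * T.det = A.det := by rw [← det_mul, hTT]
  have hdetA : 0 < A.det := hA.det_pos
  have hdetB : 0 < B.det := hB.det_pos
  have hdetT : 0 < T.det := by
    have h0 : T.det ≠ 0 := by
      intro h
      rw [h, mul_zero] at hdetT2
      exact hdetA.ne' hdetT2.symm
    exact lt_of_le_of_ne (aux_psd_det_nonneg hT) (Ne.symm h0)
  have hTinv : T * T⁻¹ = 1 := mul_nonsing_inv T hdetT.ne'.isUnit
  have hTinv' : T⁻¹ * T = 1 := nonsing_inv_mul T hdetT.ne'.isUnit
  have hTinvH : T⁻¹.IsHermitian := hT.isHermitian.inv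
  set C := T⁻¹ * B * T⁻¹ with hCdef
  have hC : C.PosSemidef := by
    have := hB.posSemidef.conjTranspose_mul_mul_same (B := T⁻¹)
    rwa [hTinvH.eq] at this
  have hdetTinv : T⁻¹.det = T.det⁻¹ := by
    rw [det_nonsing_inv, Ring.inverse_eq_inv']
  have hdetC : C.det = B.det / A.det := by
    rw [hCdef, det_mul, det_mul, hdetTinv, ← hdetT2]
    field_simp
  have hdetCpos : 0 < C.det := by rw [hdetC]; positivity
  have hkey : a • A + b • B = T * (a • (1 : Matrix (Fin n) (Fin n) ℝ) + b • C) * T := by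
    have e1 : T * (a • (1 : Matrix (Fin n) (Fin n) ℝ)) * T = a • A := by
      rw [Matrix.mul_smul, Matrix.smul_mul, mul_one, hTT]
    have e2 : T * (b • C) * T = b • B := by
      rw [Matrix.mul_smul, Matrix.smul_mul, hCdef]
      congr 1
      rw [show T * (T⁻¹ * B * T⁻¹) * T = (T * T⁻¹) * B * (T⁻¹ * T) by
        simp only [Matrix.mul_assoc], hTinv, hTinv', one_mul, mul_one]
    rw [Matrix.mul_add, Matrix.add_mul, e1, e2]
  have hdetkey : (a • A + b • B).det = A.det * (a • (1 : Matrix (Fin n) (Fin n) ℝ) + b • C).det := by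
    rw [hkey, det_mul, det_mul, mul_comm _ T.det, ← mul_assoc, hdetT2]
  have hineq := aux_det_smul_one_add_smul hC ha hb hab
  have hpos : (0:ℝ) < C.det ^ b := Real.rpow_pos_of_pos hdetCpos b
  calc a * Real.log A.det + b * Real.log B.det
      = Real.log A.det + b * Real.log C.det := by
        rw [hdetC, Real.log_div hdetB.ne' hdetA.ne', show a = 1 - b from by linarith]
        ring
    _ = Real.log A.det + Real.log (C.det ^ b) := by rw [Real.log_rpow hdetCpos]
    _ ≤ Real.log A.det + Real.log (a • (1 : Matrix (Fin n) (Fin n) ℝ) + b • C).det := by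
        exact add_le_add_right (Real.log_le_log hpos hineq) _
    _ = Real.log (a • A + b • B).det := by
        rw [hdetkey, Real.log_mul hdetA.ne' (lt_of_lt_of_le hpos hineq).ne']

lemma aux_convex_posDef : Convex ℝ {M : Matrix (Fin n) (Fin n) ℝ | M.PosDef} := by
  intro A hA B hB a b ha hb hab
  rcases eq_or_lt_of_le ha with rfl | ha'
  · have : b = 1 := by linarith
    subst this; simpa using hB
  · exact (aux_posDef_smul hA ha').add_posSemidef (aux_posSemidef_smul hB.posSemidef hb)

lemma aux_logdet_concave :
    ConcaveOn ℝ {M : Matrix (Fin n) (Fin n) ℝ | M.PosDef} (fun M => Real.log M.det) :=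
  ⟨aux_convex_posDef, fun A hA B hB a b ha hb hab => by
    simpa [smul_eq_mul] using aux_logdet_pair hA hB ha hb hab⟩

end Aux

/-- Paper's Theorem 1: the averaged global log-determinant objective is bounded
below by the average of the per-source log-determinant objectives. -/
theorem stmt_0 (ε : ℝ) (hε : 0 < ε) (N m : ℕ) (hN : 0 < N)
    (k : Fin N → ℕ) (Z : ∀ i : Fin N, Matrix (Fin (k i)) (Fin m) ℝ) :
    (1 / (N : ℝ)) * ∑ i : Fin N,
        Real.log ((1 + (1 / ε) • (Z i * (Z i)ᵀ)).det)
      ≤ Real.log ((1 + (1 / ((N : ℝ) * ε)) • ∑ i : Fin N, (Z i)ᵀ * Z i).det) := by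
  have hNpos : (0:ℝ) < N := by exact_mod_cast hN
  set P : Fin N → Matrix (Fin m) (Fin m) ℝ :=
    fun i => 1 + (1 / ε) • ((Z i)ᵀ * Z i) with hP
  have hPpd : ∀ i, (P i).PosDef := by
    intro i
    refine Matrix.PosDef.add_posSemidef Matrix.PosDef.one ?_
    refine aux_posSemidef_smul ?_ (by positivity)
    have := Matrix.posSemidef_conjTranspose_mul_self (Z i)
    rwa [conjTranspose_eq_transpose_of_trivial] at this
  -- Sylvester on each term
  have hsyl : ∀ i, (1 + (1 / ε) • (Z i * (Z i)ᵀ)).det = (P i).det := by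
    intro i
    have : (1 / ε) • (Z i * (Z i)ᵀ) = ((1 / ε) • Z i) * (Z i)ᵀ := by
      rw [Matrix.smul_mul]
    rw [this, Matrix.det_one_add_mul_comm, hP]
    congr 2
    rw [Matrix.mul_smul]
  -- Jensen
  have hjensen := aux_logdet_concave.le_map_sum (t := Finset.univ)
    (w := fun _ : Fin N => 1 / (N:ℝ)) (p := P)
    (fun i _ => by positivity)
    (by
      rw [Finset.sum_const, Finset.card_univ, Fintype.card_fin, nsmul_eq_mul]
      field_simp)
    (fun i _ => hPpd i)
  have hsum : ∑ i : Fin N, (1 / (N:ℝ)) • P i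
      = 1 + (1 / ((N : ℝ) * ε)) • ∑ i : Fin N, (Z i)ᵀ * Z i := by
    rw [hP]
    simp only [smul_add, Finset.sum_add_distrib]
    congr 1
    · rw [Finset.sum_const, Finset.card_univ, Fintype.card_fin,
        ← Nat.cast_smul_eq_nsmul ℝ, smul_smul, mul_one_div, div_self hNpos.ne', one_smul]
    · simp only [smul_smul]
      rw [← Finset.smul_sum]
      congr 1
      rw [div_mul_div_comm, one_mul]
  calc (1 / (N : ℝ)) * ∑ i : Fin N, Real.log ((1 + (1 / ε) • (Z i * (Z i)ᵀ)).det)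
      = ∑ i : Fin N, (1 / (N:ℝ)) • Real.log ((P i).det) := by
        rw [Finset.mul_sum]
        exact Finset.sum_congr rfl fun i _ => by rw [hsyl i, smul_eq_mul]
    _ ≤ Real.log (∑ i : Fin N, (1 / (N:ℝ)) • P i).det := hjensen
    _ = Real.log ((1 + (1 / ((N : ℝ) * ε)) • ∑ i : Fin N, (Z i)ᵀ * Z i).det) := by rw [hsum]
end

section
/- Let ε > 0, let Z be a real n × m matrix, let N be a positive integer, and let A_1, …, A_N be pairwise disjoint finite subsets of {1, …, n} with union A. Let B be a set with A_i ⊆ B ⊆ A for every i, and set Y_i = B \ A_i (so that A_i ∪ Y_i = B and A_i ∩ Y_i = ∅). Then log det(I_{|A|} + (1/ε) Z_A Z_Aᵀ) ≥ (1/N) ∑_{i=1}^N log det(I_{|A_i ∪ Y_i|} + (1/ε) Z_{A_i ∪ Y_i} Z_{A_i ∪ Y_i}ᵀ) ≥ (1/N) ∑_{i=1}^N log det(I_{|A_i|} + (1/ε) Z_{A_i} Z_{A_i}ᵀ). (Paper's Theorem 2: the feedback-conditioned lower bound L^lower(·|Y) is sandwiched between the true objective L_real and the unconditioned lower bound L^lower.)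 -/
open Matrix

/-- For a finite index set `S ⊆ {1, …, n}`, `Z_S` is the `|S| × m` submatrix of `Z`
consisting of the rows of `Z` indexed by `S`, and `logDetSub ε Z S` is
`log det (I + (1/ε) Z_S Z_Sᵀ)`. -/
noncomputable def logDetSub {n m : ℕ} (ε : ℝ) (Z : Matrix (Fin n) (Fin m) ℝ)
    (S : Finset (Fin n)) : ℝ :=
  Real.log ((1 + (1 / ε) •
    (Z.submatrix (fun x : S => (x : Fin n)) id *
      (Z.submatrix (fun x : S => (x : Fin n)) id)ᵀ)).det)

lemma one_le_det_one_add {ι : Type*} [Fintype ι] [DecidableEq ι]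
    {R : Matrix ι ι ℝ} (hR : R.PosSemidef) : 1 ≤ (1 + R).det := by
  have h1 : (1 + R).PosSemidef := Matrix.PosSemidef.add (Matrix.PosSemidef.one) hR
  have hH := h1.1
  rw [hH.det_eq_prod_eigenvalues]
  refine le_trans (le_of_eq Finset.prod_const_one.symm)
    (Finset.prod_le_prod (fun i _ => zero_le_one) fun i _ => ?_)
  set v : ι → ℝ := ⇑(hH.eigenvectorBasis i) with hvdef
  have hv : (1 + R) *ᵥ v = hH.eigenvalues i • v := hH.mulVec_eigenvectorBasis i
  have hvne : v ≠ 0 := by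
    intro h
    exact hH.eigenvectorBasis.orthonormal.ne_zero i (by ext j; exact congrFun h j)
  have hvv : 0 < v ⬝ᵥ v := by
    have hnn : 0 ≤ v ⬝ᵥ v := Finset.sum_nonneg fun j _ => mul_self_nonneg _
    rcases lt_or_eq_of_le hnn with h | h
    · exact h
    · exact absurd (dotProduct_self_eq_zero.mp h.symm) hvne
  have hQ : 0 ≤ v ⬝ᵥ (R *ᵥ v) := by
    have := hR.dotProduct_mulVec_nonneg v
    simpa using this
  have expand : v ⬝ᵥ ((1 + R) *ᵥ v) = v ⬝ᵥ v + v ⬝ᵥ (R *ᵥ v) := by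
    rw [Matrix.add_mulVec, dotProduct_add, Matrix.one_mulVec]
  have expand2 : v ⬝ᵥ ((1 + R) *ᵥ v) = hH.eigenvalues i * (v ⬝ᵥ v) := by
    rw [hv, dotProduct_smul, smul_eq_mul]
  have key : (1:ℝ) ≤ hH.eigenvalues i := by nlinarith [hQ, hvv]
  exact_mod_cast key

open scoped MatrixOrder in
lemma det_le_det_add {ι : Type*} [Fintype ι] [DecidableEq ι]
    {P Q : Matrix ι ι ℝ} (hP : P.PosDef) (hQ : Q.PosSemidef) :
    P.det ≤ (P + Q).det := by
  set S := CFC.sqrt P with hSdef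
  have hSpsd : S.PosSemidef := Matrix.nonneg_iff_posSemidef.mp (CFC.sqrt_nonneg P)
  have hSS : S * S = P := CFC.sqrt_mul_sqrt_self P hP.posSemidef.nonneg
  have hPdet : 0 < P.det := hP.det_pos
  have hdet : S.det * S.det = P.det := by rw [← Matrix.det_mul, hSS]
  have hSdetne : S.det ≠ 0 := by
    intro h
    rw [h, mul_zero] at hdet
    exact hPdet.ne (hdet)
  have hSunit : IsUnit S.det := isUnit_iff_ne_zero.mpr hSdetne
  have hSinvH : (S⁻¹)ᴴ = S⁻¹ := by
    rw [Matrix.conjTranspose_nonsing_inv, hSpsd.1]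
  have hR : ((S⁻¹)ᴴ * Q * S⁻¹).PosSemidef := hQ.conjTranspose_mul_mul_same S⁻¹
  rw [hSinvH] at hR
  have key : P + Q = S * (1 + S⁻¹ * Q * S⁻¹) * S := by
    rw [Matrix.mul_add, Matrix.mul_one, Matrix.add_mul, hSS]
    congr 1
    rw [← Matrix.mul_assoc, ← Matrix.mul_assoc, Matrix.mul_nonsing_inv _ hSunit,
      Matrix.one_mul, Matrix.mul_assoc, Matrix.nonsing_inv_mul _ hSunit, Matrix.mul_one]
  rw [key, Matrix.det_mul, Matrix.det_mul]
  have h1 : 1 ≤ (1 + S⁻¹ * Q * S⁻¹).det := one_le_det_one_add hR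
  calc P.det = S.det * 1 * S.det := by rw [mul_one, hdet]
    _ ≤ S.det * (1 + S⁻¹ * Q * S⁻¹).det * S.det := by
        have hSd : 0 ≤ S.det := by
          rw [hSpsd.1.det_eq_prod_eigenvalues]
          exact Finset.prod_nonneg fun i _ => by exact_mod_cast hSpsd.eigenvalues_nonneg i
        nlinarith [hSd, h1]

lemma smul_gram_posSemidef {a b : Type*} [Fintype a] [Fintype b] [DecidableEq b]
    {c : ℝ} (hc : 0 ≤ c) (M : Matrix a b ℝ) : (c • (Mᵀ * M)).PosSemidef := by
  have hbase : (Mᵀ * M).PosSemidef := by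
    have h := Matrix.posSemidef_conjTranspose_mul_self M
    have : Mᴴ = Mᵀ := by ext i j; simp [Matrix.conjTranspose_apply]
    rwa [this] at h
  constructor
  · show (c • (Mᵀ * M))ᴴ = c • (Mᵀ * M)
    rw [Matrix.conjTranspose_smul, star_trivial, hbase.1]
  · intro x
    exact (hbase.smul hc).2 x

lemma gram_apply {n m : ℕ} (Z : Matrix (Fin n) (Fin m) ℝ) (S : Finset (Fin n)) (j k : Fin m) :
    ((Z.submatrix (fun x : S => (x : Fin n)) id)ᵀ *
      Z.submatrix (fun x : S => (x : Fin n)) id) j k = ∑ i ∈ S, Z i j * Z i k := by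
  rw [Matrix.mul_apply]
  simp only [Matrix.transpose_apply, Matrix.submatrix_apply, id_eq]
  exact Finset.sum_coe_sort S (fun i => Z i j * Z i k)

lemma logDetSub_eq {n m : ℕ} (ε : ℝ) (Z : Matrix (Fin n) (Fin m) ℝ) (S : Finset (Fin n)) :
    logDetSub ε Z S = Real.log ((1 + (1/ε) •
      ((Z.submatrix (fun x : S => (x : Fin n)) id)ᵀ *
        Z.submatrix (fun x : S => (x : Fin n)) id)).det) := by
  unfold logDetSub
  congr 1
  set M := Z.submatrix (fun x : S => (x : Fin n)) id with hM
  rw [show (1 : Matrix S S ℝ) + (1/ε) • (M * Mᵀ) = 1 + M * ((1/ε) • Mᵀ) by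
    rw [Matrix.mul_smul]]
  rw [Matrix.det_one_add_mul_comm, Matrix.smul_mul]

lemma logDetSub_mono {n m : ℕ} {ε : ℝ} (hε : 0 < ε) (Z : Matrix (Fin n) (Fin m) ℝ)
    {S T : Finset (Fin n)} (hST : S ⊆ T) : logDetSub ε Z S ≤ logDetSub ε Z T := by
  have hc : (0:ℝ) ≤ 1/ε := by positivity
  set G : Finset (Fin n) → Matrix (Fin m) (Fin m) ℝ := fun S =>
    (1/ε) • ((Z.submatrix (fun x : S => (x : Fin n)) id)ᵀ *
      Z.submatrix (fun x : S => (x : Fin n)) id) with hG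
  have hpsd : ∀ S : Finset (Fin n), (G S).PosSemidef := fun S =>
    smul_gram_posSemidef hc _
  have hsplit : G T = G S + G (T \ S) := by
    ext j k
    simp only [hG, Matrix.smul_apply, Matrix.add_apply, smul_eq_mul, gram_apply]
    rw [← Finset.sum_sdiff hST]
    ring
  have hPD : (1 + G S).PosDef := Matrix.PosDef.add_posSemidef Matrix.PosDef.one (hpsd S)
  rw [logDetSub_eq, logDetSub_eq]
  refine Real.log_le_log hPD.det_pos ?_
  rw [show (1 + G T) = (1 + G S) + G (T \ S) by rw [hsplit, add_assoc]]
  exact det_le_det_add hPD (hpsd (T \ S))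

/-- Paper's Theorem 2: with `Y_i = B \ A_i`, the feedback-conditioned lower bound
is sandwiched between the true objective and the unconditioned lower bound. -/
theorem stmt_2 {n m N : ℕ} (hN : 0 < N) (ε : ℝ) (hε : 0 < ε)
    (Z : Matrix (Fin n) (Fin m) ℝ) (A : Fin N → Finset (Fin n))
    (hdisj : ∀ i j, i ≠ j → Disjoint (A i) (A j))
    (B : Finset (Fin n)) (hAB : ∀ i, A i ⊆ B)
    (hBA : B ⊆ Finset.univ.biUnion A) :
    (1 / (N : ℝ)) * ∑ i, logDetSub ε Z (A i ∪ (B \ A i))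
        ≤ logDetSub ε Z (Finset.univ.biUnion A) ∧
    (1 / (N : ℝ)) * ∑ i, logDetSub ε Z (A i)
        ≤ (1 / (N : ℝ)) * ∑ i, logDetSub ε Z (A i ∪ (B \ A i)) := by
  have hUB : ∀ i, A i ∪ (B \ A i) = B := fun i => Finset.union_sdiff_of_subset (hAB i)
  have hNpos : (0:ℝ) < N := by exact_mod_cast hN
  constructor
  · have h1 : ∑ i, logDetSub ε Z (A i ∪ (B \ A i)) = N * logDetSub ε Z B := by
      simp only [hUB, Finset.sum_const, Finset.card_univ, Fintype.card_fin, smul_eq_mul, nsmul_eq_mul]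
    rw [h1, ← mul_assoc, one_div, inv_mul_cancel₀ hNpos.ne', one_mul]
    exact logDetSub_mono hε Z hBA
  · refine mul_le_mul_of_nonneg_left (Finset.sum_le_sum fun i _ => ?_) (by positivity)
    rw [hUB i]
    exact logDetSub_mono hε Z (hAB i)
end

section
/- Let Z be a real k × m matrix, let H be a real m × m symmetric positive semidefinite matrix, and let H^{1/2} denote the (unique) symmetric positive semidefinite square root of H. Let J₁ be a k-element subset of the column indices {1, …, m}. Then ( det( (Z H^{1/2})_{[k], J₁} ) )² ≤ det(Z Zᵀ) · det(H_{J₁}). (Paper's Theorem 3.) -/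
/-!
With `S` the columns `J₁` of `H^{1/2}`, the left side is `det (Z S) ^ 2` and `Sᵀ S = H_{J₁}`,
so the claim is the determinantal Cauchy–Schwarz inequality
`det (A B)² ≤ det (A Aᵀ) det (Bᵀ B)`. If `G = Bᵀ B` is invertible, then
`A Aᵀ = (A B) G⁻¹ (A B)ᵀ + R Rᵀ` with `R = A - A B G⁻¹ Bᵀ`, and the determinant is monotone on
positive semidefinite matrices: conjugating by `X^{-1/2}` turns `det X ≤ det (X + Y)` into
`1 ≤ det (1 + N) = ∏ (1 + λᵢ)`.
-/

open Matrix

/-- The square root of a positive semidefinite matrix, as `Matrix.PosSemidef.sqrt` was defined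
in Mathlib (December 2024); the definition has since been removed from Mathlib. -/
noncomputable def Matrix.PosSemidef.sqrt {n 𝕜 : Type*} [Fintype n] [DecidableEq n] [RCLike 𝕜]
    [PartialOrder 𝕜] {A : Matrix n n 𝕜} (hA : A.PosSemidef) : Matrix n n 𝕜 :=
  hA.1.eigenvectorUnitary.1 * diagonal ((↑) ∘ (Real.sqrt ·) ∘ hA.1.eigenvalues) *
    (star hA.1.eigenvectorUnitary : Matrix n n 𝕜)

namespace Matrix.PosSemidef

variable {n : Type*} [Fintype n] [DecidableEq n]

lemma sqrt_mul_sqrt {A : Matrix n n ℝ} (hA : A.PosSemidef) : hA.sqrt * hA.sqrt = A := by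
  set U : Matrix n n ℝ := hA.1.eigenvectorUnitary.1
  have hUU : star U * U = 1 := Unitary.coe_star_mul_self _
  have hconj (D E : Matrix n n ℝ) : U * D * star U * (U * E * star U) = U * (D * E) * star U := by
    simp only [Matrix.mul_assoc, ← Matrix.mul_assoc (star U) U, hUU, Matrix.one_mul]
  conv_rhs => rw [hA.1.spectral_theorem, Unitary.conjStarAlgAut_apply]
  rw [sqrt, hconj, diagonal_mul_diagonal]
  congr 3
  funext i
  simp [Real.mul_self_sqrt (hA.eigenvalues_nonneg i)]

lemma posSemidef_sqrt {A : Matrix n n ℝ} (hA : A.PosSemidef) : hA.sqrt.PosSemidef :=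
  (posSemidef_diagonal_iff.mpr fun _ => by simp [Real.sqrt_nonneg]).mul_mul_conjTranspose_same _

lemma one_le_det_one_add {N : Matrix n n ℝ} (hN : N.PosSemidef) : 1 ≤ (1 + N).det := by
  set U := hN.1.eigenvectorUnitary
  have hdiag : (1 + N).det = ∏ i, (1 + hN.1.eigenvalues i) := by
    conv_lhs => rw [hN.1.spectral_theorem, ← map_one (Unitary.conjStarAlgAut ℝ _ U), ← map_add,
      Unitary.conjStarAlgAut_apply, det_mul, det_mul, mul_right_comm, ← det_mul,
      Unitary.mul_star_self_of_mem U.2, det_one, one_mul, ← diagonal_one, diagonal_add,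
      det_diagonal]
    rfl
  rw [hdiag]
  exact Finset.one_le_prod fun i _ => le_add_of_nonneg_right (hN.eigenvalues_nonneg i)

lemma det_le_det_add {X Y : Matrix n n ℝ} (hX : X.PosSemidef) (hY : Y.PosSemidef) :
    X.det ≤ (X + Y).det := by
  by_cases hX0 : X.det = 0
  · exact hX0 ▸ (hX.add hY).det_nonneg
  set W := hX.sqrt
  have hWW : W * W = X := hX.sqrt_mul_sqrt
  have hW : IsUnit W.det := isUnit_iff_ne_zero.mpr fun h =>
    hX0 (by rw [← hWW, det_mul, h, zero_mul])
  have hWinv : (W⁻¹)ᴴ = W⁻¹ := by rw [conjTranspose_nonsing_inv, hX.posSemidef_sqrt.1]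
  have hN : (W⁻¹ * Y * W⁻¹).PosSemidef := by
    simpa only [hWinv] using hY.conjTranspose_mul_mul_same W⁻¹
  have hfac : X + Y = W * (1 + W⁻¹ * Y * W⁻¹) * W := by
    rw [Matrix.mul_add, Matrix.add_mul, Matrix.mul_one, hWW, ← Matrix.mul_assoc,
      ← Matrix.mul_assoc, mul_nonsing_inv _ hW, Matrix.one_mul, Matrix.mul_assoc,
      nonsing_inv_mul _ hW, Matrix.mul_one]
  have hdet : (X + Y).det = X.det * (1 + W⁻¹ * Y * W⁻¹).det := by
    rw [hfac, ← hWW, det_mul, det_mul, det_mul]; ring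
  rw [hdet]
  exact le_mul_of_one_le_right hX.det_nonneg hN.one_le_det_one_add

end Matrix.PosSemidef

namespace Matrix

variable {κ μ : Type*} [Fintype κ] [DecidableEq κ] [Fintype μ]

lemma det_mul_eq_zero_of_det_transpose_mul_self_eq_zero (A : Matrix κ μ ℝ) {B : Matrix μ κ ℝ}
    (hB : (Bᵀ * B).det = 0) : (A * B).det = 0 := by
  obtain ⟨v, hv0, hv⟩ := exists_mulVec_eq_zero_iff.mpr hB
  have hBv : B *ᵥ v = 0 := by
    have hker : v ∈ LinearMap.ker (Bᵀ * B).mulVecLin := hv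
    rwa [ker_mulVecLin_transpose_mul_self] at hker
  exact exists_mulVec_eq_zero_iff.mp ⟨v, hv0, by rw [← mulVec_mulVec, hBv, mulVec_zero]⟩

lemma sq_det_mul_le (A : Matrix κ μ ℝ) (B : Matrix μ κ ℝ) :
    (A * B).det ^ 2 ≤ (A * Aᵀ).det * (Bᵀ * B).det := by
  by_cases hG0 : (Bᵀ * B).det = 0
  · simp [det_mul_eq_zero_of_det_transpose_mul_self_eq_zero A hG0, hG0]
  set G := Bᵀ * B with hG_def
  set F := A * B with hF_def
  have hG : IsUnit G.det := isUnit_iff_ne_zero.mpr hG0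
  have hGinv : (G⁻¹)ᵀ = G⁻¹ := by
    rw [transpose_nonsing_inv, transpose_mul, transpose_transpose]
  -- `B G⁻¹ Bᵀ` projects orthogonally onto the column space of `B`, and `R = A (1 - B G⁻¹ Bᵀ)`
  set R := A - F * G⁻¹ * Bᵀ
  have hsplit : A * Aᵀ = F * G⁻¹ * Fᵀ + R * Rᵀ := by
    have hRt : Rᵀ = Aᵀ - B * G⁻¹ * Fᵀ := by
      simp only [R, transpose_sub, transpose_mul, transpose_transpose, hGinv, Matrix.mul_assoc]
    have h1 : A * (B * G⁻¹ * Fᵀ) = F * G⁻¹ * Fᵀ := by simp only [hF_def, Matrix.mul_assoc]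
    have h2 : F * G⁻¹ * Bᵀ * Aᵀ = F * G⁻¹ * Fᵀ := by
      simp only [hF_def, transpose_mul, Matrix.mul_assoc]
    have h3 : F * G⁻¹ * Bᵀ * (B * G⁻¹ * Fᵀ) = F * G⁻¹ * Fᵀ := by
      calc _ = F * (G⁻¹ * G) * G⁻¹ * Fᵀ := by simp only [hG_def, Matrix.mul_assoc]
        _ = _ := by rw [nonsing_inv_mul _ hG, Matrix.mul_one]
    rw [hRt, Matrix.sub_mul, Matrix.mul_sub, Matrix.mul_sub, h1, h2, h3]
    abel
  have hproj : (F * G⁻¹ * Fᵀ).det * G.det = F.det ^ 2 := by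
    rw [det_mul, det_mul, det_transpose, mul_right_comm, mul_assoc (F.det), ← det_mul,
      nonsing_inv_mul _ hG, det_one]; ring
  have hPSD : (F * G⁻¹ * Fᵀ).PosSemidef := by
    simpa using (posSemidef_conjTranspose_mul_self B).inv.mul_mul_conjTranspose_same F
  have hRR : (R * Rᵀ).PosSemidef := by
    simpa using posSemidef_self_mul_conjTranspose R
  calc F.det ^ 2 = (F * G⁻¹ * Fᵀ).det * G.det := hproj.symm
    _ ≤ (A * Aᵀ).det * G.det := by
      rw [hsplit]
      exact mul_le_mul_of_nonneg_right (hPSD.det_le_det_add hRR)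
        (posSemidef_conjTranspose_mul_self B).det_nonneg

end Matrix

/-- Paper's Theorem 3:
`(det((Z H^{1/2})_{[k],J₁}))² ≤ det(Z Zᵀ) det(H_{J₁})`, where `H^{1/2}` is the
unique symmetric positive semidefinite square root of `H` and columns are taken
from `J₁` in increasing order. -/
theorem stmt_3 {k m : ℕ} (Z : Matrix (Fin k) (Fin m) ℝ)
    (H : Matrix (Fin m) (Fin m) ℝ) (hH : H.PosSemidef)
    (J₁ : Finset (Fin m)) (hJ : J₁.card = k) :
    ((Z * hH.sqrt).submatrix id
        (fun i : Fin k => ((J₁.orderIsoOfFin hJ i : Fin m)))).det ^ 2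
      ≤ (Z * Zᵀ).det *
        (H.submatrix (fun i : Fin k => ((J₁.orderIsoOfFin hJ i : Fin m)))
          (fun i : Fin k => ((J₁.orderIsoOfFin hJ i : Fin m)))).det := by
  set J : Fin k → Fin m := fun i => J₁.orderIsoOfFin hJ i
  have hcols : (Z * hH.sqrt).submatrix id J = Z * hH.sqrt.submatrix id J := by
    simpa using submatrix_mul Z hH.sqrt id id J Function.bijective_id
  have hgram : (hH.sqrt.submatrix id J)ᵀ * hH.sqrt.submatrix id J = H.submatrix J J := by
    rw [transpose_submatrix, ← submatrix_mul _ _ _ _ _ Function.bijective_id,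
      ← conjTranspose_eq_transpose_of_trivial, hH.posSemidef_sqrt.1, hH.sqrt_mul_sqrt]
  rw [hcols, ← hgram]
  exact sq_det_mul_le Z _
end

section
/- Let k ≤ m, let Z be a real k × m matrix, and let H be a real m × m symmetric positive semidefinite matrix. Then det(Z H Zᵀ) ≤ det(Z Zᵀ) · ∑_{J₁} det(H_{J₁}), where the sum ranges over all k-element subsets J₁ of {1, …, m}. (Corollary of the paper's Theorem 3 combined with its Cauchy–Binet expansion in Eq. (13)–(15), underlying the determinant-preserving sparse CSI approximation.) -/
open Matrix Finset

variable {k m : ℕ}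

lemma expand_det (A : Matrix (Fin k) (Fin m) ℝ) (B : Matrix (Fin m) (Fin k) ℝ) :
    (A * B).det = ∑ g : Fin k → Fin m, (A.submatrix id g).det * ∏ i, B (g i) i := by
  have h1 : ∀ g : Fin k → Fin m, (A.submatrix id g).det
      = ∑ σ : Equiv.Perm (Fin k), (Equiv.Perm.sign σ : ℝ) * ∏ i, A (σ i) (g i) := by
    intro g
    simp [Matrix.det_apply', Matrix.submatrix_apply]
  rw [Matrix.det_apply']
  have h2 : ∀ σ : Equiv.Perm (Fin k), ∏ i, (A * B) (σ i) i
      = ∑ g : Fin k → Fin m, ∏ i, (A (σ i) (g i) * B (g i) i) := by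
    intro σ
    simp only [Matrix.mul_apply]
    rw [Finset.prod_univ_sum]
    simp
  simp_rw [h2, Finset.mul_sum]
  rw [Finset.sum_comm]
  refine Finset.sum_congr rfl fun g _ => ?_
  rw [h1, Finset.sum_mul]
  refine Finset.sum_congr rfl fun σ _ => ?_
  rw [Finset.prod_mul_distrib]
  ring

lemma key_det (A : Matrix (Fin k) (Fin m) ℝ) (B : Matrix (Fin m) (Fin k) ℝ) :
    ∑ g : Fin k → Fin m, (A.submatrix id g).det * (B.submatrix g id).det
      = ((Nat.factorial k : ℕ) : ℝ) * (A * B).det := by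
  have hB : ∀ g : Fin k → Fin m, (B.submatrix g id).det
      = ∑ σ : Equiv.Perm (Fin k), (Equiv.Perm.sign σ : ℝ) * ∏ i, B (g (σ i)) i := by
    intro g; simp [Matrix.det_apply', Matrix.submatrix_apply]
  simp_rw [hB, Finset.mul_sum]
  rw [Finset.sum_comm]
  have hσ : ∀ σ : Equiv.Perm (Fin k),
      (∑ g : Fin k → Fin m, (A.submatrix id g).det
          * ((Equiv.Perm.sign σ : ℝ) * ∏ i, B (g (σ i)) i))
        = (A * B).det := by
    intro σ
    have hsq : ((Equiv.Perm.sign σ : ℤ) : ℝ) * ((Equiv.Perm.sign σ : ℤ) : ℝ) = 1 := by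
      rw [← Int.cast_mul, ← Units.val_mul, Int.units_mul_self, Units.val_one, Int.cast_one]
    rw [expand_det]
    rw [← Equiv.sum_comp (Equiv.arrowCongr σ (Equiv.refl (Fin m)))
      (fun g : Fin k → Fin m => (A.submatrix id g).det
          * ((Equiv.Perm.sign σ : ℝ) * ∏ i, B (g (σ i)) i))]
    refine Finset.sum_congr rfl fun h _ => ?_
    have h1 : (Equiv.arrowCongr σ (Equiv.refl (Fin m))) h = h ∘ ⇑σ.symm := rfl
    rw [h1]
    have h2 : ∏ i, B ((h ∘ ⇑σ.symm) (σ i)) i = ∏ i, B (h i) i := by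
      refine Finset.prod_congr rfl fun i _ => ?_
      simp
    have h3 : (A.submatrix id (h ∘ ⇑σ.symm)).det
        = ((Equiv.Perm.sign σ : ℤ) : ℝ) * (A.submatrix id h).det := by
      have : A.submatrix id (h ∘ ⇑σ.symm) = (A.submatrix id h).submatrix id ⇑σ.symm := by
        rw [Matrix.submatrix_submatrix]; rfl
      rw [this, Matrix.det_permute', Equiv.Perm.sign_symm]
    rw [h2, h3]
    ring_nf
    rw [sq, hsq, one_mul]
  calc ∑ σ : Equiv.Perm (Fin k), ∑ g : Fin k → Fin m,
        (A.submatrix id g).det * ((Equiv.Perm.sign σ : ℝ) * ∏ i, B (g (σ i)) i)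
      = ∑ σ : Equiv.Perm (Fin k), (A * B).det := Finset.sum_congr rfl fun σ _ => hσ σ
    _ = ((Nat.factorial k : ℕ) : ℝ) * (A * B).det := by
        rw [Finset.sum_const, Finset.card_univ, Fintype.card_perm, Fintype.card_fin,
          nsmul_eq_mul]

lemma group_det (H : Matrix (Fin m) (Fin m) ℝ) :
    ∑ g : Fin k → Fin m, (H.submatrix g g).det
      = ((Nat.factorial k : ℕ) : ℝ) *
        ∑ J ∈ Finset.powersetCard k (Finset.univ : Finset (Fin m)),
          (H.submatrix (fun x : J => (x : Fin m)) (fun x : J => (x : Fin m))).det := by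
  classical
  rw [← Finset.sum_fiberwise_of_maps_to
    (g := fun g : Fin k → Fin m => Finset.image g Finset.univ)
    (t := (Finset.univ : Finset (Fin m)).powerset)
    (fun g _ => Finset.mem_powerset.2 (Finset.subset_univ _))]
  rw [Finset.mul_sum]
  rw [← Finset.sum_subset
      (show Finset.powersetCard k (Finset.univ : Finset (Fin m))
          ⊆ (Finset.univ : Finset (Fin m)).powerset from
        fun J hJ => Finset.mem_powerset.2 (Finset.mem_powersetCard.1 hJ).1)]
  · -- equal sums over powersetCard
    refine Finset.sum_congr rfl fun J hJ => ?_
    have hJcard : J.card = k := (Finset.mem_powersetCard.1 hJ).2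
    -- inner sum equals k! * det (H_J)
    have hbij : ∀ g : Fin k → Fin m, ∀ hg : Finset.image g Finset.univ = J,
        Function.Bijective (fun i : Fin k =>
          (⟨g i, hg ▸ Finset.mem_image_of_mem g (Finset.mem_univ i)⟩ : {x // x ∈ J})) := by
      intro g hg
      have hinj : Function.Injective g := by
        have hcard : (Finset.image g Finset.univ).card = (Finset.univ : Finset (Fin k)).card := by
          rw [hg, hJcard, Finset.card_univ, Fintype.card_fin]
        have := Finset.card_image_iff.1 hcard
        intro a b hab
        exact this (Finset.mem_coe.2 (Finset.mem_univ a)) (Finset.mem_coe.2 (Finset.mem_univ b)) hab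
      rw [Fintype.bijective_iff_injective_and_card]
      constructor
      · intro a b hab
        exact hinj (congrArg Subtype.val hab)
      · rw [Fintype.card_coe, hJcard, Fintype.card_fin]
    rw [Finset.sum_bij' (s := Finset.univ.filter fun g : Fin k → Fin m =>
          Finset.image g Finset.univ = J)
        (t := (Finset.univ : Finset (Fin k ≃ {x // x ∈ J})))
        (i := fun g hg => Equiv.ofBijective _
          (hbij g (Finset.mem_filter.1 hg).2))
        (j := fun e _ => fun i => ((e i : {x // x ∈ J}) : Fin m))
        (g := fun _ => (H.submatrix (fun x : J => (x : Fin m)) (fun x : J => (x : Fin m))).det)]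
    · rw [Finset.sum_const, Finset.card_univ]
      have : Fintype.card (Fin k ≃ {x // x ∈ J}) = Nat.factorial k := by
        rw [Fintype.card_equiv (J.orderIsoOfFin hJcard).toEquiv, Fintype.card_fin]
      rw [this, nsmul_eq_mul]
    · intro g hg
      exact Finset.mem_univ _
    · intro e he
      rw [Finset.mem_filter]
      refine ⟨Finset.mem_univ _, ?_⟩
      ext x
      simp only [Finset.mem_image, Finset.mem_univ, true_and]
      constructor
      · rintro ⟨i, rfl⟩; exact (e i).2
      · intro hx; exact ⟨e.symm ⟨x, hx⟩, by simp⟩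
    · intro g hg
      rfl
    · intro e he
      ext i
      rfl
    · intro g hg
      have e := Equiv.ofBijective _ (hbij g (Finset.mem_filter.1 hg).2)
      rw [← Matrix.det_submatrix_equiv_self
        (Equiv.ofBijective _ (hbij g (Finset.mem_filter.1 hg).2))
        (H.submatrix (fun x : J => (x : Fin m)) (fun x : J => (x : Fin m)))]
      rw [Matrix.submatrix_submatrix]
      rfl
  · -- vanishing terms
    intro J hJ hJk
    refine Finset.sum_eq_zero fun g hg => ?_
    have hgJ : Finset.image g Finset.univ = J := (Finset.mem_filter.1 hg).2
    have hninj : ¬ Function.Injective g := by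
      intro hinj
      apply hJk
      rw [Finset.mem_powersetCard]
      refine ⟨Finset.mem_powerset.1 hJ, ?_⟩
      rw [← hgJ, Finset.card_image_of_injective _ hinj, Finset.card_univ, Fintype.card_fin]
    obtain ⟨a, b, hab, hne⟩ := Function.not_injective_iff.1 hninj
    refine Matrix.det_zero_of_row_eq hne ?_
    funext l
    simp [Matrix.submatrix_apply, hab]

/-- Corollary of the paper's Theorem 3 with Cauchy–Binet:
`det(Z H Zᵀ) ≤ det(Z Zᵀ) ∑_{J₁} det(H_{J₁})`, summing over all `k`-element
subsets `J₁` of the column indices. -/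
theorem stmt_4 {k m : ℕ} (hk : k ≤ m) (Z : Matrix (Fin k) (Fin m) ℝ)
    (H : Matrix (Fin m) (Fin m) ℝ) (hH : H.PosSemidef) :
    (Z * H * Zᵀ).det ≤ (Z * Zᵀ).det *
      ∑ J₁ ∈ Finset.powersetCard k (Finset.univ : Finset (Fin m)),
        (H.submatrix (fun x : J₁ => (x : Fin m)) (fun x : J₁ => (x : Fin m))).det := by
  classical
  set c : ℝ := ((Nat.factorial k : ℕ) : ℝ) with hc
  have hcpos : (0 : ℝ) < c := by
    rw [hc]; exact_mod_cast Nat.factorial_pos k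
  open scoped MatrixOrder in set S := CFC.sqrt H with hSdef
  have hSS : S * S = H := by open scoped MatrixOrder in exact CFC.sqrt_mul_sqrt_self H hH.nonneg
  have hSt : Sᵀ = S := by
    have h1 : Sᴴ = S := by open scoped MatrixOrder in exact (CFC.sqrt_nonneg H).posSemidef.1
    ext i j
    have := congrFun (congrFun h1 i) j
    simpa [Matrix.conjTranspose_apply] using this
  set W := Z * S with hWdef
  have hW : Z * H * Zᵀ = W * Wᵀ := by
    rw [hWdef, Matrix.transpose_mul, hSt,
      show Z * S * (S * Zᵀ) = Z * (S * S) * Zᵀ by simp only [Matrix.mul_assoc], hSS]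
  have hA1 : c * (Z * H * Zᵀ).det = ∑ f : Fin k → Fin m, (W.submatrix id f).det ^ 2 := by
    rw [hW, ← key_det W Wᵀ]
    refine Finset.sum_congr rfl fun f _ => ?_
    rw [show Wᵀ.submatrix f id = (W.submatrix id f)ᵀ from
      (Matrix.transpose_submatrix W id f).symm, Matrix.det_transpose, sq]
  have hmulsub : ∀ (M : Matrix (Fin k) (Fin m) ℝ) (N : Matrix (Fin m) (Fin m) ℝ)
      (f : Fin k → Fin m), (M * N).submatrix id f = M * N.submatrix id f := by
    intro M N f
    ext i j
    simp [Matrix.mul_apply, Matrix.submatrix_apply]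
  have hA2 : ∀ f : Fin k → Fin m,
      (c * (W.submatrix id f).det) ^ 2
        ≤ (c * (Z * Zᵀ).det) * (c * (H.submatrix f f).det) := by
    intro f
    have e1 : c * (W.submatrix id f).det
        = ∑ g : Fin k → Fin m, (Z.submatrix id g).det * (S.submatrix g f).det := by
      rw [hWdef, hmulsub, ← key_det Z (S.submatrix id f)]
      refine Finset.sum_congr rfl fun g _ => ?_
      rw [Matrix.submatrix_submatrix]
      rfl
    have e2 : c * (Z * Zᵀ).det = ∑ g : Fin k → Fin m, (Z.submatrix id g).det ^ 2 := by
      rw [← key_det Z Zᵀ]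
      refine Finset.sum_congr rfl fun g _ => ?_
      rw [show Zᵀ.submatrix g id = (Z.submatrix id g)ᵀ from
        (Matrix.transpose_submatrix Z id g).symm, Matrix.det_transpose, sq]
    have e3 : c * (H.submatrix f f).det
        = ∑ g : Fin k → Fin m, (S.submatrix g f).det ^ 2 := by
      have hprod : (S.submatrix f id) * (S.submatrix id f) = H.submatrix f f := by
        ext i j
        simp [Matrix.mul_apply, Matrix.submatrix_apply, ← hSS]
      rw [← hprod, ← key_det (S.submatrix f id) (S.submatrix id f)]
      refine Finset.sum_congr rfl fun g _ => ?_
      rw [Matrix.submatrix_submatrix, Matrix.submatrix_submatrix]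
      simp only [Function.comp_id, Function.id_comp]
      have hT : S.submatrix f g = (S.submatrix g f)ᵀ := by
        rw [Matrix.transpose_submatrix, hSt]
      rw [hT, Matrix.det_transpose, sq]
    rw [e1, e2, e3]
    exact Finset.sum_mul_sq_le_sq_mul_sq Finset.univ _ _
  have sumineq : ∑ f : Fin k → Fin m, (W.submatrix id f).det ^ 2
      ≤ (Z * Zᵀ).det * ∑ f : Fin k → Fin m, (H.submatrix f f).det := by
    rw [Finset.mul_sum]
    refine Finset.sum_le_sum fun f _ => ?_
    have h := hA2 f
    rw [mul_pow, show (c * (Z * Zᵀ).det) * (c * (H.submatrix f f).det)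
      = c ^ 2 * ((Z * Zᵀ).det * (H.submatrix f f).det) from by ring] at h
    exact le_of_mul_le_mul_left h (by positivity)
  have final : c * (Z * H * Zᵀ).det
      ≤ c * ((Z * Zᵀ).det *
        ∑ J₁ ∈ Finset.powersetCard k (Finset.univ : Finset (Fin m)),
          (H.submatrix (fun x : J₁ => (x : Fin m)) (fun x : J₁ => (x : Fin m))).det) := by
    rw [hA1]
    calc ∑ f : Fin k → Fin m, (W.submatrix id f).det ^ 2
        ≤ (Z * Zᵀ).det * ∑ f : Fin k → Fin m, (H.submatrix f f).det := sumineq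
      _ = _ := by rw [group_det]; ring
  exact le_of_mul_le_mul_left final hcpos
end
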